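/- Left unweakening (strengthening) for IKC: for arbitrary contexts Δ and Γ (both possibly containing locks), any type A, and any IKC term t : Δ ++ Γ ⊢ A that does not mention any variables from Δ (every variable occurrence in t refers to a position within the Γ part of the concatenated context), there exists an IKC term t' : Γ ⊢ A. -/
import Mathlib


namespace IKC

/-- Types of the Fitch-style calculus: base type ι, functions, box. -/
inductive Ty : Type
  | base : Ty
  | arr : Ty → Ty → Ty
  | box : Ty → Ty

/-- Typing contexts: empty, extension by a type, extension by a lock 🔒. -/
inductive Cx : Type
  | nil : Cx
  | snoc : Cx → Ty → Cx
  | lock : Cx → Cx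

/-- IKC modal accessibility relation Δ ◁ Γ: Γ = Δ,🔒,Δ' with Δ' lock-free. -/
inductive Ext : Cx → Cx → Type
  | nil : Ext Γ (.lock Γ)
  | var : Ext Δ Γ → Ext Δ (.snoc Γ A)

/-- De Bruijn variables (no rule through locks). -/
inductive Var : Cx → Ty → Type
  | zero : Var (.snoc Γ A) A
  | succ : Var Γ A → Var (.snoc Γ B) A

/-- Intrinsically-typed terms of IKC. -/
inductive Tm : Cx → Ty → Type
  | var : Var Γ A → Tm Γ A
  | lam : Tm (.snoc Γ A) B → Tm Γ (.arr A B)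
  | app : Tm Γ (.arr A B) → Tm Γ A → Tm Γ B
  | box : Tm (.lock Γ) A → Tm Γ (.box A)
  | unbox : Tm Δ (.box A) → Ext Δ Γ → Tm Γ A

/-- Concatenation of contexts: Δ ++ Γ appends the entries of Γ to the right of Δ. -/
def Cx.concat : Cx → Cx → Cx
  | Δ, .nil => Δ
  | Δ, .snoc Γ A => .snoc (Cx.concat Δ Γ) A
  | Δ, .lock Γ => .lock (Cx.concat Δ Γ)

/-- Left concatenation on accessibility proofs. -/
def concatExt (Δ : Cx) : {Θ Γ : Cx} → Ext Θ Γ → Ext (Cx.concat Δ Θ) (Cx.concat Δ Γ)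
  | _, _, .nil => .nil
  | _, _, .var e => .var (concatExt Δ e)

/-- The variable v of the concatenated context Δ ++ Γ points into the Γ part. -/
inductive VarIn : (Δ Γ : Cx) → {A : Ty} → Var (Cx.concat Δ Γ) A → Prop
  | zero {Δ Γ : Cx} {A : Ty} : VarIn Δ (.snoc Γ A) .zero
  | succ {Δ Γ : Cx} {A B : Ty} {v : Var (Cx.concat Δ Γ) A} :
      VarIn Δ Γ v → VarIn Δ (.snoc Γ B) (.succ v)

/-- The term t : Δ ++ Γ ⊢ A does not mention any variables from Δ: every
variable occurrence in t refers to a position within the Γ part of the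
concatenated context. -/
inductive NoDelta : (Δ Γ : Cx) → {A : Ty} → Tm (Cx.concat Δ Γ) A → Prop
  | var {Δ Γ : Cx} {A : Ty} {v : Var (Cx.concat Δ Γ) A} :
      VarIn Δ Γ v → NoDelta Δ Γ (.var v)
  | lam {Δ Γ : Cx} {A B : Ty} {t : Tm (Cx.concat Δ (.snoc Γ A)) B} :
      NoDelta Δ (.snoc Γ A) t → NoDelta Δ Γ (.lam t)
  | app {Δ Γ : Cx} {A B : Ty} {t : Tm (Cx.concat Δ Γ) (.arr A B)} {u : Tm (Cx.concat Δ Γ) A} :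
      NoDelta Δ Γ t → NoDelta Δ Γ u → NoDelta Δ Γ (.app t u)
  | box {Δ Γ : Cx} {A : Ty} {t : Tm (Cx.concat Δ (.lock Γ)) A} :
      NoDelta Δ (.lock Γ) t → NoDelta Δ Γ (.box t)
  | unboxIn {Δ Θ Γ : Cx} {A : Ty} (e : Ext Θ Γ) {t : Tm (Cx.concat Δ Θ) (.box A)} :
      NoDelta Δ Θ t → NoDelta Δ Γ (.unbox t (concatExt Δ e))
  | unboxOut {Δ Γ Θ' : Cx} {A : Ty} (e : Ext Θ' (Cx.concat Δ Γ)) {t : Tm Θ' (.box A)} :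
      NoDelta Θ' .nil t → NoDelta Δ Γ (.unbox t e)

/-! ### Auxiliary development: a Kripke model over `Option Cx` -/

/-- Order-preserving embeddings (weakenings) between contexts. -/
inductive Wk : Cx → Cx → Type
  | nil : Wk .nil .nil
  | drop : Wk Γ Δ → Wk Γ (.snoc Δ A)
  | keep : Wk Γ Δ → Wk (.snoc Γ A) (.snoc Δ A)
  | lock : Wk Γ Δ → Wk (.lock Γ) (.lock Δ)

def idWk : (Γ : Cx) → Wk Γ Γ
  | .nil => .nil
  | .snoc Γ _ => .keep (idWk Γ)
  | .lock Γ => .lock (idWk Γ)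

def compWk : {a b c : Cx} → Wk a b → Wk b c → Wk a c
  | _, _, _, w, .drop w' => .drop (compWk w w')
  | _, _, _, .drop w, .keep w' => .drop (compWk w w')
  | _, _, _, .keep w, .keep w' => .keep (compWk w w')
  | _, _, _, .lock w, .lock w' => .lock (compWk w w')
  | _, _, _, .nil, .nil => .nil

def renVar : {Γ Δ : Cx} → {A : Ty} → Wk Γ Δ → Var Γ A → Var Δ A
  | _, _, _, .nil, v => nomatch v
  | _, _, _, .drop w, v => .succ (renVar w v)
  | _, _, _, .keep _, .zero => .zero
  | _, _, _, .keep w, .succ v => .succ (renVar w v)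
  | _, _, _, .lock _, v => nomatch v

/-- An accessibility proof yields a weakening from the locked context. -/
def extWk : {Θ Γ : Cx} → Ext Θ Γ → Wk (.lock Θ) Γ
  | Θ, _, .nil => idWk (.lock Θ)
  | _, _, .var e => .drop (extWk e)

/-- Factorization of an accessibility proof through a weakening. -/
def factorExt : {Θ Γ Δ : Cx} → Ext Θ Γ → Wk Γ Δ → (Θ' : Cx) ×' Wk Θ Θ' ×' Ext Θ' Δ
  | _, _, _, e, .drop w =>
      let ⟨Θ', a, b⟩ := factorExt e w; ⟨Θ', a, .var b⟩
  | _, _, _, .var e, .keep w =>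
      let ⟨Θ', a, b⟩ := factorExt e w; ⟨Θ', a, .var b⟩
  | _, _, _, .nil, .lock w => ⟨_, w, .nil⟩

/-- Renaming of terms along a weakening. -/
def renTm : {Γ Δ : Cx} → {A : Ty} → Wk Γ Δ → Tm Γ A → Tm Δ A
  | _, _, _, w, .var v => .var (renVar w v)
  | _, _, _, w, .lam t => .lam (renTm (.keep w) t)
  | _, _, _, w, .app t u => .app (renTm w t) (renTm w u)
  | _, _, _, w, .box t => .box (renTm (.lock w) t)
  | _, _, _, w, .unbox t e =>
      let ⟨_, a, b⟩ := factorExt e w; .unbox (renTm a t) b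

/-- Worlds: contexts plus one extra "global" world `none`. -/
abbrev World := Option Cx

/-- Weakening relation on worlds. -/
def WkW : World → World → Prop
  | none, _ => True
  | some a, some b => Nonempty (Wk a b)
  | some _, none => False

/-- Accessibility relation on worlds. -/
def ExtW : World → World → Prop
  | none, none => True
  | none, some _ => False
  | some a, some b => Nonempty (Ext a b)
  | some _, none => False

def lockW : World → World
  | none => none
  | some Γ => some (.lock Γ)

theorem reflWkW : (w : World) → WkW w w
  | none => trivial
  | some Γ => ⟨idWk Γ⟩

theorem transWkW : {a b c : World} → WkW a b → WkW b c → WkW a c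
  | none, _, _, _, _ => trivial
  | some _, some _, some _, ⟨u⟩, ⟨v⟩ => ⟨compWk u v⟩
  | some _, some _, none, _, h => h.elim
  | some _, none, _, h, _ => h.elim

theorem extSelfW : (w : World) → ExtW w (lockW w)
  | none => trivial
  | some _ => ⟨.nil⟩

theorem extWkW : {w w' : World} → ExtW w w' → WkW (lockW w) w'
  | none, none, _ => trivial
  | none, some _, h => h.elim
  | some _, some _, ⟨e⟩ => ⟨extWk e⟩
  | some _, none, h => h.elim

theorem factor2 : {w w₁ w₂ : World} → WkW w w₁ → ExtW w₁ w₂ →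
    ∃ w₃, ExtW w w₃ ∧ WkW w₃ w₂
  | none, _, w₂, _, _ => ⟨none, trivial, trivial⟩
  | some Γ, some Γ₁, some Γ₂, ⟨k⟩, ⟨e⟩ =>
      ⟨some (.lock Γ), ⟨.nil⟩, ⟨compWk (.lock k) (extWk e)⟩⟩
  | some _, some _, none, _, h => h.elim
  | some _, none, _, h, _ => h.elim

/-- Kripke semantics of types. -/
def Sem : Ty → World → Prop
  | .base, some Γ => Nonempty (Tm Γ .base)
  | .base, none => ∀ Γ, Nonempty (Tm Γ .base)
  | .arr A B, w => ∀ w', WkW w w' → Sem A w' → Sem B w'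
  | .box A, w => ∀ w', ExtW w w' → Sem A w'

theorem monoSem : (A : Ty) → {w w' : World} → WkW w w' → Sem A w → Sem A w'
  | .base, some _, some _, ⟨k⟩, ⟨t⟩ => ⟨renTm k t⟩
  | .base, none, some Γ', _, h => h Γ'
  | .base, none, none, _, h => h
  | .base, some _, none, hk, _ => hk.elim
  | .arr A B, w, w', hk, f => fun w₂ k₂ a => f w₂ (transWkW hk k₂) a
  | .box A, w, w', hk, s => fun w₂ e₂ => by
      obtain ⟨w₃, e₃, k₃⟩ := factor2 hk e₂
      exact monoSem A k₃ (s w₃ e₃)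

/-- Quote and unquote, by recursion on the type. -/
theorem quoteUnquote : (A : Ty) → (Γ : Cx) →
    (Sem A (some Γ) → Nonempty (Tm Γ A)) ∧ (Nonempty (Tm Γ A) → Sem A (some Γ)) := by
  intro A
  induction A with
  | base => exact fun Γ => ⟨id, id⟩
  | arr A B ihA ihB =>
      intro Γ
      constructor
      · intro f
        have a : Sem A (some (Cx.snoc Γ A)) := (ihA _).2 ⟨.var .zero⟩
        have b : Sem B (some (Cx.snoc Γ A)) := f _ ⟨.drop (idWk Γ)⟩ a
        obtain ⟨tb⟩ := (ihB _).1 b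
        exact ⟨.lam tb⟩
      · rintro ⟨t⟩ w' hk a
        match w', hk with
        | some Δ', ⟨k⟩ =>
          obtain ⟨ta⟩ := (ihA _).1 a
          exact (ihB _).2 ⟨.app (renTm k t) ta⟩
        | none, hk => exact hk.elim
  | box A ihA =>
      intro Γ
      constructor
      · intro s
        obtain ⟨u⟩ := (ihA (Cx.lock Γ)).1 (s _ ⟨Ext.nil⟩)
        exact ⟨.box u⟩
      · rintro ⟨t⟩ w' he
        match w', he with
        | some Δ', ⟨e⟩ => exact (ihA _).2 ⟨.unbox t e⟩
        | none, he => exact he.elim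

/-- Semantic environments for the `Γ` part, at a world. -/
inductive Env : Cx → World → Prop
  | nil {w : World} : Env .nil w
  | snoc {Γ : Cx} {A : Ty} {w : World} : Env Γ w → Sem A w → Env (.snoc Γ A) w
  | lock {Γ : Cx} {w₀ w : World} : Env Γ w₀ → WkW (lockW w₀) w → Env (.lock Γ) w

theorem monoEnv : {Γ : Cx} → {w w' : World} → Env Γ w → WkW w w' → Env Γ w'
  | _, _, _, .nil, _ => .nil
  | _, _, _, .snoc ρ a, hk => .snoc (monoEnv ρ hk) (monoSem _ hk a)
  | _, _, _, .lock ρ k₀, hk => .lock ρ (transWkW k₀ hk)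

theorem trimEnv : {Θ Γ : Cx} → {w : World} → Ext Θ Γ → Env Γ w →
    ∃ w₀, Env Θ w₀ ∧ WkW (lockW w₀) w := by
  intro Θ Γ w e ρ
  induction e with
  | nil => cases ρ with | lock ρ₀ k => exact ⟨_, ρ₀, k⟩
  | var e ih => cases ρ with | snoc ρ₀ _ => exact ih ρ₀

theorem lookupEnv {Δ Γ : Cx} {A : Ty} {v : Var (Cx.concat Δ Γ) A} (hv : VarIn Δ Γ v)
    {w : World} (ρ : Env Γ w) : Sem A w := by
  induction hv with
  | zero => cases ρ with | snoc _ a => exact a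
  | succ _ ih => cases ρ with | snoc ρ₀ _ => exact ih ρ₀

/-- Evaluation of `NoDelta` terms. -/
theorem eval {Δ Γ : Cx} {A : Ty} {t : Tm (Cx.concat Δ Γ) A} (h : NoDelta Δ Γ t) :
    ∀ w, Env Γ w → Sem A w := by
  induction h with
  | var hv => exact fun w ρ => lookupEnv hv ρ
  | lam _ ih => exact fun w ρ w' hk a => ih w' (.snoc (monoEnv ρ hk) a)
  | app _ _ iht ihu => exact fun w ρ => iht w ρ w (reflWkW w) (ihu w ρ)
  | box _ ih => exact fun w ρ w' he => ih w' (.lock ρ (extWkW he))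
  | unboxIn e _ ih =>
      intro w ρ
      obtain ⟨w₀, ρ₀, k⟩ := trimEnv e ρ
      exact monoSem _ k (ih w₀ ρ₀ (lockW w₀) (extSelfW w₀))
  | unboxOut e _ ih =>
      intro w _
      exact monoSem _ (w := none) (w' := w) trivial (ih none .nil none trivial)

/-- The identity environment. -/
theorem idEnv : (Γ : Cx) → Env Γ (some Γ)
  | .nil => .nil
  | .snoc Γ A => .snoc (monoEnv (idEnv Γ) ⟨.drop (idWk Γ)⟩) ((quoteUnquote A _).2 ⟨.var .zero⟩)
  | .lock Γ => .lock (idEnv Γ) ⟨idWk (.lock Γ)⟩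

/-- Left unweakening (strengthening) for IKC: a term t : Δ ++ Γ ⊢ A that does
not mention any variables from Δ can be strengthened to a term in Γ. -/
theorem left_unweakening (Δ Γ : Cx) (A : Ty) (t : Tm (Cx.concat Δ Γ) A)
    (h : NoDelta Δ Γ t) : Nonempty (Tm Γ A) :=
  (quoteUnquote A Γ).1 (eval h (some Γ) (idEnv Γ))

end IKC
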